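/- (Theorem on regular weights, optimality.) Let n ≥ 1, let Q be a regular, positive definite real n×n matrix with diagonal entries q and off-diagonal entries p where q > p, let c ∈ ℝ^n and g ∈ ℝ. Define C = ∑_{i=1}^{n} c_i, z* = (2(q + (n−1)p)g − C)/n, and x*_i = (c_i + z* − 2pg)/(2q − 2p) for each i. Then x* is the unique optimal solution of the problem: minimize xᵀQx − cᵀx over all x ∈ ℝ^n with ∑_{i=1}^{n} x_i = g; that is, ∑_i x*_i = g and x*ᵀQx* − cᵀx* < xᵀQx − cᵀx for every x ≠ x* with ∑_i x_i = g. -/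

import Mathlib

open Matrix

/-!
`x*` satisfies the Lagrange condition: the gradient `2Qx* − c` of the objective is the constant
vector `z*`, so `z*` is the multiplier of the constraint `∑ xᵢ = g`. For a feasible `x`, the linear
part of the objective's expansion around `x*` pairs this constant vector with `x − x*`, whose
coordinates sum to zero, so the objective exceeds its value at `x*` by
`(x − x*)ᵀQ(x − x*)`, which is positive when `x ≠ x*`.
-/

namespace Matrix

variable {ι R : Type*} [Fintype ι]

theorem IsSymm.dotProduct_mulVec_comm [CommSemiring R] {Q : Matrix ι ι R} (hQ : Q.IsSymm)
    (x y : ι → R) : x ⬝ᵥ Q *ᵥ y = y ⬝ᵥ Q *ᵥ x := by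
  rw [dotProduct_mulVec, ← mulVec_transpose, hQ.eq, dotProduct_comm]

theorem IsSymm.quadratic_sub_quadratic_eq [CommRing R] {Q : Matrix ι ι R} (hQ : Q.IsSymm)
    (c x y : ι → R) :
    x ⬝ᵥ Q *ᵥ x - c ⬝ᵥ x - (y ⬝ᵥ Q *ᵥ y - c ⬝ᵥ y)
      = (x - y) ⬝ᵥ Q *ᵥ (x - y) + (2 • (Q *ᵥ y) - c) ⬝ᵥ (x - y) := by
  simp only [mulVec_sub, dotProduct_sub, sub_dotProduct, smul_dotProduct,
    dotProduct_comm (Q *ᵥ y), hQ.dotProduct_mulVec_comm x y]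
  abel

theorem PosDef.quadratic_lt_of_gradient_eq_const {Q : Matrix ι ι ℝ} (hQ : Q.PosDef)
    {c y : ι → ℝ} {μ : ℝ} (hy : 2 • (Q *ᵥ y) - c = Function.const ι μ) {x : ι → ℝ}
    (hsum : ∑ i, x i = ∑ i, y i) (hxy : x ≠ y) :
    y ⬝ᵥ Q *ᵥ y - c ⬝ᵥ y < x ⬝ᵥ Q *ᵥ x - c ⬝ᵥ x := by
  have hlin : (2 • (Q *ᵥ y) - c) ⬝ᵥ (x - y) = 0 := by
    rw [hy]
    simp [dotProduct, ← Finset.mul_sum, Finset.sum_sub_distrib, hsum]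
  have hquad : 0 < (x - y) ⬝ᵥ Q *ᵥ (x - y) := by
    simpa using hQ.dotProduct_mulVec_pos (sub_ne_zero.mpr hxy)
  have hsymm : Q.IsSymm := isHermitian_iff_isSymm.mp hQ.isHermitian
  linarith [hsymm.quadratic_sub_quadratic_eq c x y]

theorem mulVec_apply_of_regular [CommRing R] {Q : Matrix ι ι R} {q p : R}
    (hq : ∀ i, Q i i = q) (hp : ∀ i j, i ≠ j → Q i j = p) (y : ι → R) (i : ι) :
    (Q *ᵥ y) i = (q - p) * y i + p * ∑ j, y j := by
  classical
  rw [mulVec, dotProduct, Fintype.sum_eq_add_sum_compl i, Fintype.sum_eq_add_sum_compl i y, hq,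
    Finset.sum_congr rfl fun j hj => by rw [hp i j (Ne.symm (by simpa using hj))], ← Finset.mul_sum]
  ring

end Matrix

/-- Theorem on regular weights, optimality: if moreover `Q` is
positive definite (with `q > p`), then `x*` is the unique optimal solution of
`min xᵀQx − cᵀx  s.t.  ∑ᵢ xᵢ = g`. -/
theorem regular_unique_optimal_solution (n : ℕ) (hn : 1 ≤ n)
    (Q : Matrix (Fin n) (Fin n) ℝ) (q p : ℝ)
    (hq : ∀ i, Q i i = q) (hp : ∀ i j, i ≠ j → Q i j = p)
    (hQ : Q.PosDef) (hqp : p < q)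
    (c : Fin n → ℝ) (g : ℝ) (C zs : ℝ) (xs : Fin n → ℝ)
    (hC : C = ∑ i, c i)
    (hz : zs = (2 * (q + ((n : ℝ) - 1) * p) * g - C) / (n : ℝ))
    (hx : ∀ i, xs i = (c i + zs - 2 * p * g) / (2 * q - 2 * p)) :
    (∑ i, xs i = g) ∧
      ∀ x : Fin n → ℝ, (∑ i, x i) = g → x ≠ xs →
        xs ⬝ᵥ Q.mulVec xs - c ⬝ᵥ xs < x ⬝ᵥ Q.mulVec x - c ⬝ᵥ x := by
  have hqp' : q - p ≠ 0 := sub_ne_zero.mpr hqp.ne'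
  have hsum : ∑ i, xs i = g := by
    have hn' : (n : ℝ) ≠ 0 := Nat.cast_ne_zero.mpr (by omega)
    simp only [hx, ← Finset.sum_div, Finset.sum_add_distrib, Finset.sum_sub_distrib, ← hC,
      Finset.sum_const, Finset.card_univ, Fintype.card_fin, nsmul_eq_mul, hz]
    field_simp
    ring
  have hgrad : 2 • (Q *ᵥ xs) - c = Function.const (Fin n) zs := by
    funext i
    have hxi := hx i
    field_simp at hxi
    rw [Pi.sub_apply, Pi.smul_apply, mulVec_apply_of_regular hq hp, hsum, Function.const_apply,
      two_nsmul]
    linear_combination hxi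
  exact ⟨hsum, fun x hxg hne =>
    hQ.quadratic_lt_of_gradient_eq_const hgrad (hxg.trans hsum.symm) hne⟩
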